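/- Let ζ = (ζ₁,ζ₂,ζ₃) ∈ {−1,0,1}³ with ζ ≠ (0,0,0) and λ₁, λ₂, λ₃ > 0, with f, ∇ and the composition tensor T as in the context. Then T(X,Y) = 0 for all X, Y ∈ m if and only if (ζ₁,ζ₂,ζ₃) ≠ ±(1,1,1). In particular, the invariant f-structures with characteristic collections ±(1,−1,1), ±(1,1,−1), ±(1,−1,−1) and all invariant f-structures of rank 4 and rank 2 are Hermitian f-structures with respect to every invariant Riemannian metric (λ₁,λ₂,λ₃) on SU(3)/T_max, while the structure ±(1,1,1) is not a Hermitian f-structure for any such metric. -/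
import Mathlib


open ComplexConjugate Matrix

noncomputable section

/-- The matrix D(a,b,c) ∈ su(3): zero diagonal, X₁₂ = a, X₂₁ = −conj a,
X₂₃ = b, X₃₂ = −conj b, X₁₃ = conj c, X₃₁ = −c. -/
def Dm (a b c : ℂ) : Matrix (Fin 3) (Fin 3) ℂ :=
  !![0, a, conj c; -conj a, 0, b; -c, -conj b, 0]

/-- The real Lie algebra su(3) of traceless skew-Hermitian 3×3 complex
matrices (as a set of matrices, with bracket [X,Y] = XY − YX). -/
def su3 : Set (Matrix (Fin 3) (Fin 3) ℂ) :=
  {X | Xᴴ = -X ∧ X.trace = 0}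

/-- h: the diagonal matrices in su(3). -/
def hSet : Set (Matrix (Fin 3) (Fin 3) ℂ) :=
  {X | X ∈ su3 ∧ ∀ i j, i ≠ j → X i j = 0}

/-- m = {D(a,b,c)}. -/
def mSet : Set (Matrix (Fin 3) (Fin 3) ℂ) :=
  {X | ∃ a b c : ℂ, X = Dm a b c}

/-- The three components m₁, m₂, m₃ of m. -/
def mComp : Fin 3 → Set (Matrix (Fin 3) (Fin 3) ℂ) :=
  ![{X | ∃ a : ℂ, X = Dm a 0 0}, {X | ∃ b : ℂ, X = Dm 0 b 0},
    {X | ∃ c : ℂ, X = Dm 0 0 c}]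

/-- ⟨X,Y⟩₀ = −½ Re tr(XY). -/
def inner0 (X Y : Matrix (Fin 3) (Fin 3) ℂ) : ℝ :=
  -(1 / 2) * ((X * Y).trace).re

end

noncomputable section

/-- The m-component of a matrix in su(3) = h ⊕ m (h the diagonal part):
zero out the diagonal. -/
def projm (Z : Matrix (Fin 3) (Fin 3) ℂ) : Matrix (Fin 3) (Fin 3) ℂ :=
  Z - Matrix.diagonal fun i => Z i i

/-- Projections of m onto its components m₁, m₂, m₃. -/
def mProj : Fin 3 → (Matrix (Fin 3) (Fin 3) ℂ → Matrix (Fin 3) (Fin 3) ℂ) :=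
  ![fun X => Dm (X 0 1) 0 0, fun X => Dm 0 (X 1 2) 0, fun X => Dm 0 0 (-(X 2 0))]

/-- The invariant metric g = (λ₁,λ₂,λ₃): g(X,Y) = Σ_j λ_j ⟨X_j, Y_j⟩₀ for
X, Y ∈ m, where X_j is the m_j-component; m₁, m₂, m₃ are mutually
orthogonal. -/
def gmet (lam : Fin 3 → ℝ) (X Y : Matrix (Fin 3) (Fin 3) ℂ) : ℝ :=
  ∑ j : Fin 3, lam j * inner0 (mProj j X) (mProj j Y)

end

noncomputable section

/-- The invariant f-structure with characteristic collection (ζ₁,ζ₂,ζ₃):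
f(D(a,b,c)) = D(ζ₁ia, ζ₂ib, ζ₃ic). -/
def fm (z : Fin 3 → ℝ) (X : Matrix (Fin 3) (Fin 3) ℂ) :
    Matrix (Fin 3) (Fin 3) ℂ :=
  Dm ((z 0 : ℂ) * Complex.I * X 0 1) ((z 1 : ℂ) * Complex.I * X 1 2)
    ((z 2 : ℂ) * Complex.I * (-(X 2 0)))

/-- The Nomizu function α(X,Y) = ½[X,Y]_m + U(X,Y) of the Levi-Civita
connection. -/
def alphaU (U : Matrix (Fin 3) (Fin 3) ℂ → Matrix (Fin 3) (Fin 3) ℂ →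
      Matrix (Fin 3) (Fin 3) ℂ)
    (X Y : Matrix (Fin 3) (Fin 3) ℂ) : Matrix (Fin 3) (Fin 3) ℂ :=
  (1 / 2 : ℝ) • projm ⁅X, Y⁆ + U X Y

/-- The covariant derivative (∇_X f)(Y) = α(X, fY) − f(α(X,Y)). -/
def nablaU (U : Matrix (Fin 3) (Fin 3) ℂ → Matrix (Fin 3) (Fin 3) ℂ →
      Matrix (Fin 3) (Fin 3) ℂ)
    (z : Fin 3 → ℝ) (X Y : Matrix (Fin 3) (Fin 3) ℂ) :
    Matrix (Fin 3) (Fin 3) ℂ :=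
  alphaU U X (fm z Y) - fm z (alphaU U X Y)

/-- The composition tensor T(X,Y) = ¼ f((∇_{fX} f)(fY) − (∇_{f²X} f)(f²Y)). -/
def TU (U : Matrix (Fin 3) (Fin 3) ℂ → Matrix (Fin 3) (Fin 3) ℂ →
      Matrix (Fin 3) (Fin 3) ℂ)
    (z : Fin 3 → ℝ) (X Y : Matrix (Fin 3) (Fin 3) ℂ) :
    Matrix (Fin 3) (Fin 3) ℂ :=
  (1 / 4 : ℝ) • fm z (nablaU U z (fm z X) (fm z Y) -
    nablaU U z (fm z (fm z X)) (fm z (fm z Y)))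

end

section MyHelpers

lemma Dm_mem (a b c : ℂ) : Dm a b c ∈ mSet := ⟨a, b, c, rfl⟩

lemma Dm_add (a b c a' b' c' : ℂ) :
    Dm a b c + Dm a' b' c' = Dm (a + a') (b + b') (c + c') := by
  ext i j; fin_cases i <;> fin_cases j <;> simp [Dm, map_add] <;> ring

lemma Dm_sub (a b c a' b' c' : ℂ) :
    Dm a b c - Dm a' b' c' = Dm (a - a') (b - b') (c - c') := by
  ext i j; fin_cases i <;> fin_cases j <;> simp [Dm, map_sub] <;> ring

lemma Dm_smul (r : ℝ) (a b c : ℂ) :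
    r • Dm a b c = Dm (r * a) (r * b) (r * c) := by
  ext i j; fin_cases i <;> fin_cases j <;>
    simp [Dm, Complex.real_smul, _root_.map_mul, Complex.conj_ofReal] <;> ring

lemma Dm_inj {a b c a' b' c' : ℂ} (h : Dm a b c = Dm a' b' c') :
    a = a' ∧ b = b' ∧ c = c' := by
  refine ⟨?_, ?_, ?_⟩
  · have := congrFun (congrFun h 0) 1; simpa [Dm] using this
  · have := congrFun (congrFun h 1) 2; simpa [Dm] using this
  · have := congrFun (congrFun h 2) 0; simpa [Dm] using this

lemma Dm_zero : Dm 0 0 0 = 0 := by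
  ext i j; fin_cases i <;> fin_cases j <;> simp [Dm, Matrix.vecHead, Matrix.vecTail]

lemma projm_bracket (a1 b1 c1 a2 b2 c2 : ℂ) :
    projm ⁅Dm a1 b1 c1, Dm a2 b2 c2⁆ =
    Dm (conj (b1*c2 - b2*c1)) (conj (c1*a2 - c2*a1)) (conj (a1*b2 - a2*b1)) := by
  ext i j
  fin_cases i <;> fin_cases j <;>
    simp [projm, Dm, Ring.lie_def, Matrix.mul_apply, Fin.sum_univ_three, Matrix.diagonal] <;>
    ring

lemma fm_Dm (z : Fin 3 → ℝ) (a b c : ℂ) :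
    fm z (Dm a b c) =
    Dm ((z 0 : ℂ) * Complex.I * a) ((z 1 : ℂ) * Complex.I * b)
      ((z 2 : ℂ) * Complex.I * c) := by
  simp [fm, Dm]

lemma gmet_Dm (lam : Fin 3 → ℝ) (a b c a' b' c' : ℂ) :
    gmet lam (Dm a b c) (Dm a' b' c') =
    lam 0 * (a * conj a').re + lam 1 * (b * conj b').re + lam 2 * (c * conj c').re := by
  simp [gmet, mProj, inner0, Dm, Fin.sum_univ_three, Matrix.trace, Matrix.diag,
    Matrix.mul_apply, Matrix.vecHead, Matrix.vecTail, Complex.mul_re, Complex.conj_re, Complex.conj_im]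
  ring

lemma U_eq (lam : Fin 3 → ℝ) (hlam : ∀ j, 0 < lam j)
    (U : Matrix (Fin 3) (Fin 3) ℂ → Matrix (Fin 3) (Fin 3) ℂ → Matrix (Fin 3) (Fin 3) ℂ)
    (hUmem : ∀ X ∈ mSet, ∀ Y ∈ mSet, U X Y ∈ mSet)
    (hUdef : ∀ X ∈ mSet, ∀ Y ∈ mSet, ∀ Z ∈ mSet,
      2 * gmet lam (U X Y) Z = gmet lam X (projm ⁅Z, Y⁆) + gmet lam (projm ⁅Z, X⁆) Y)
    (a1 b1 c1 a2 b2 c2 : ℂ) :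
    U (Dm a1 b1 c1) (Dm a2 b2 c2) =
      Dm ((((lam 2 - lam 1) / (2 * lam 0) : ℝ) : ℂ) * conj (b1*c2 + b2*c1))
         ((((lam 0 - lam 2) / (2 * lam 1) : ℝ) : ℂ) * conj (a1*c2 + a2*c1))
         ((((lam 1 - lam 0) / (2 * lam 2) : ℝ) : ℂ) * conj (a1*b2 + a2*b1)) := by
  obtain ⟨u, v, w, hW⟩ := hUmem _ (Dm_mem a1 b1 c1) _ (Dm_mem a2 b2 c2)
  have h0 := (hlam 0).ne'
  have h1 := (hlam 1).ne'
  have h2 := (hlam 2).ne'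
  have key : ∀ p q r : ℂ,
      2 * gmet lam (Dm u v w) (Dm p q r) =
        gmet lam (Dm a1 b1 c1) (projm ⁅Dm p q r, Dm a2 b2 c2⁆) +
          gmet lam (projm ⁅Dm p q r, Dm a1 b1 c1⁆) (Dm a2 b2 c2) := by
    intro p q r
    rw [← hW]
    exact hUdef _ (Dm_mem a1 b1 c1) _ (Dm_mem a2 b2 c2) _ (Dm_mem p q r)
  rw [hW]
  have e1 := key 1 0 0
  have e2 := key Complex.I 0 0
  have e3 := key 0 1 0
  have e4 := key 0 Complex.I 0
  have e5 := key 0 0 1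
  have e6 := key 0 0 Complex.I
  rw [projm_bracket, projm_bracket, gmet_Dm, gmet_Dm, gmet_Dm] at e1 e2 e3 e4 e5 e6
  have simps : True := trivial
  have hu : u = (((lam 2 - lam 1) / (2 * lam 0) : ℝ) : ℂ) * conj (b1*c2 + b2*c1) := by
    apply Complex.ext <;>
      [ (simp only [Complex.mul_re, Complex.mul_im, Complex.conj_re,
    Complex.conj_im, Complex.add_re, Complex.add_im, Complex.sub_re, Complex.sub_im,
    Complex.one_re, Complex.one_im, Complex.zero_re, Complex.zero_im, Complex.I_re,
    Complex.I_im, Complex.ofReal_re, Complex.ofReal_im, Complex.neg_re, Complex.neg_im,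
    mul_zero, zero_mul, mul_one, one_mul, sub_zero, zero_sub, add_zero, zero_add,
    neg_zero, neg_neg, mul_neg, neg_mul] at e1 ⊢; field_simp; linear_combination e1);
        (simp only [Complex.mul_re, Complex.mul_im, Complex.conj_re,
    Complex.conj_im, Complex.add_re, Complex.add_im, Complex.sub_re, Complex.sub_im,
    Complex.one_re, Complex.one_im, Complex.zero_re, Complex.zero_im, Complex.I_re,
    Complex.I_im, Complex.ofReal_re, Complex.ofReal_im, Complex.neg_re, Complex.neg_im,
    mul_zero, zero_mul, mul_one, one_mul, sub_zero, zero_sub, add_zero, zero_add,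
    neg_zero, neg_neg, mul_neg, neg_mul] at e2 ⊢; field_simp; linear_combination e2)]
  have hv : v = (((lam 0 - lam 2) / (2 * lam 1) : ℝ) : ℂ) * conj (a1*c2 + a2*c1) := by
    apply Complex.ext <;>
      [ (simp only [Complex.mul_re, Complex.mul_im, Complex.conj_re,
    Complex.conj_im, Complex.add_re, Complex.add_im, Complex.sub_re, Complex.sub_im,
    Complex.one_re, Complex.one_im, Complex.zero_re, Complex.zero_im, Complex.I_re,
    Complex.I_im, Complex.ofReal_re, Complex.ofReal_im, Complex.neg_re, Complex.neg_im,
    mul_zero, zero_mul, mul_one, one_mul, sub_zero, zero_sub, add_zero, zero_add,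
    neg_zero, neg_neg, mul_neg, neg_mul] at e3 ⊢; field_simp; linear_combination e3);
        (simp only [Complex.mul_re, Complex.mul_im, Complex.conj_re,
    Complex.conj_im, Complex.add_re, Complex.add_im, Complex.sub_re, Complex.sub_im,
    Complex.one_re, Complex.one_im, Complex.zero_re, Complex.zero_im, Complex.I_re,
    Complex.I_im, Complex.ofReal_re, Complex.ofReal_im, Complex.neg_re, Complex.neg_im,
    mul_zero, zero_mul, mul_one, one_mul, sub_zero, zero_sub, add_zero, zero_add,
    neg_zero, neg_neg, mul_neg, neg_mul] at e4 ⊢; field_simp; linear_combination e4)]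
  have hw : w = (((lam 1 - lam 0) / (2 * lam 2) : ℝ) : ℂ) * conj (a1*b2 + a2*b1) := by
    apply Complex.ext <;>
      [ (simp only [Complex.mul_re, Complex.mul_im, Complex.conj_re,
    Complex.conj_im, Complex.add_re, Complex.add_im, Complex.sub_re, Complex.sub_im,
    Complex.one_re, Complex.one_im, Complex.zero_re, Complex.zero_im, Complex.I_re,
    Complex.I_im, Complex.ofReal_re, Complex.ofReal_im, Complex.neg_re, Complex.neg_im,
    mul_zero, zero_mul, mul_one, one_mul, sub_zero, zero_sub, add_zero, zero_add,
    neg_zero, neg_neg, mul_neg, neg_mul] at e5 ⊢; field_simp; linear_combination e5);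
        (simp only [Complex.mul_re, Complex.mul_im, Complex.conj_re,
    Complex.conj_im, Complex.add_re, Complex.add_im, Complex.sub_re, Complex.sub_im,
    Complex.one_re, Complex.one_im, Complex.zero_re, Complex.zero_im, Complex.I_re,
    Complex.I_im, Complex.ofReal_re, Complex.ofReal_im, Complex.neg_re, Complex.neg_im,
    mul_zero, zero_mul, mul_one, one_mul, sub_zero, zero_sub, add_zero, zero_add,
    neg_zero, neg_neg, mul_neg, neg_mul] at e6 ⊢; field_simp; linear_combination e6)]
  rw [hu, hv, hw]

lemma Dm_eq_zero_iff {a b c : ℂ} : Dm a b c = 0 ↔ a = 0 ∧ b = 0 ∧ c = 0 := by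
  constructor
  · intro h; exact Dm_inj (h.trans Dm_zero.symm)
  · rintro ⟨rfl, rfl, rfl⟩; exact Dm_zero

lemma I2l : Complex.I ^ 2 = -1 := Complex.I_sq
lemma I3l : Complex.I ^ 3 = -Complex.I := by rw [pow_succ, I2l]; ring
lemma I4l : Complex.I ^ 4 = 1 := by rw [show (4:ℕ) = 2*2 from rfl, pow_mul, I2l]; ring
lemma I5l : Complex.I ^ 5 = Complex.I := by rw [pow_succ, I4l]; ring
lemma I6l : Complex.I ^ 6 = -1 := by rw [pow_succ, I5l, Complex.I_mul_I]
lemma I7l : Complex.I ^ 7 = -Complex.I := by rw [pow_succ, I6l]; ring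
lemma I8l : Complex.I ^ 8 = 1 := by rw [pow_succ, I7l, neg_mul, Complex.I_mul_I, neg_neg]

end MyHelpers

set_option maxHeartbeats 2000000

/-- Invariant Hermitian f-structures on the flag manifold SU(3)/T_max:
the composition tensor T vanishes identically on m if and only if the
characteristic collection is not ±(1,1,1); this holds for every invariant
Riemannian metric (λ₁,λ₂,λ₃). -/
theorem stmt_13 (z : Fin 3 → ℝ) (hz : ∀ j, z j = -1 ∨ z j = 0 ∨ z j = 1)
    (hz0 : ¬(z 0 = 0 ∧ z 1 = 0 ∧ z 2 = 0))
    (lam : Fin 3 → ℝ) (hlam : ∀ j, 0 < lam j)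
    (U : Matrix (Fin 3) (Fin 3) ℂ → Matrix (Fin 3) (Fin 3) ℂ →
      Matrix (Fin 3) (Fin 3) ℂ)
    (hUmem : ∀ X ∈ mSet, ∀ Y ∈ mSet, U X Y ∈ mSet)
    (hUsymm : ∀ X ∈ mSet, ∀ Y ∈ mSet, U X Y = U Y X)
    (hUdef : ∀ X ∈ mSet, ∀ Y ∈ mSet, ∀ Z ∈ mSet,
      2 * gmet lam (U X Y) Z =
        gmet lam X (projm ⁅Z, Y⁆) + gmet lam (projm ⁅Z, X⁆) Y) :
    (∀ X ∈ mSet, ∀ Y ∈ mSet, TU U z X Y = 0) ↔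
      ¬((z 0 = 1 ∧ z 1 = 1 ∧ z 2 = 1) ∨ (z 0 = -1 ∧ z 1 = -1 ∧ z 2 = -1)) := by
  have hU' : ∀ a1 b1 c1 a2 b2 c2 : ℂ, U (Dm a1 b1 c1) (Dm a2 b2 c2) =
      Dm ((((lam 2 - lam 1) / (2 * lam 0) : ℝ) : ℂ) * conj (b1*c2 + b2*c1))
         ((((lam 0 - lam 2) / (2 * lam 1) : ℝ) : ℂ) * conj (a1*c2 + a2*c1))
         ((((lam 1 - lam 0) / (2 * lam 2) : ℝ) : ℂ) * conj (a1*b2 + a2*b1)) :=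
    U_eq lam hlam U hUmem hUdef
  constructor
  · intro hT hcon
    set t := (lam 2 - lam 1) / (2 * lam 0) with ht
    have hA := hT (Dm 0 1 0) (Dm_mem _ _ _) (Dm 0 0 1) (Dm_mem _ _ _)
    have hB := hT (Dm 0 0 1) (Dm_mem _ _ _) (Dm 0 1 0) (Dm_mem _ _ _)
    simp only [TU, nablaU, alphaU, fm_Dm, projm_bracket, hU', Dm_smul, Dm_add, Dm_sub] at hA hB
    have h0 := (hlam 0).ne'
    rcases hcon with ⟨hz0', hz1', hz2'⟩ | ⟨hz0', hz1', hz2'⟩ <;>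
      rw [hz0', hz1', hz2'] at hA hB <;>
      obtain ⟨ha, -, -⟩ := Dm_eq_zero_iff.mp hA <;>
      obtain ⟨hb, -, -⟩ := Dm_eq_zero_iff.mp hB <;>
      rw [Complex.ext_iff] at ha hb <;>
      obtain ⟨har, -⟩ := ha <;>
      obtain ⟨hbr, -⟩ := hb <;>
      simp only [Complex.mul_re, Complex.mul_im, Complex.conj_re, Complex.conj_im,
        Complex.add_re, Complex.add_im, Complex.sub_re, Complex.sub_im, Complex.one_re,
        Complex.one_im, Complex.zero_re, Complex.zero_im, Complex.I_re, Complex.I_im,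
        Complex.ofReal_re, Complex.ofReal_im, Complex.neg_re, Complex.neg_im,
        Complex.ofReal_one, Complex.ofReal_neg, mul_zero, zero_mul, mul_one, one_mul,
        sub_zero, zero_sub, add_zero, zero_add, neg_zero, neg_neg, mul_neg, neg_mul]
        at har hbr <;>
      linarith [har, hbr]
  · intro hne X hX Y hY
    obtain ⟨a1, b1, c1, rfl⟩ := hX
    obtain ⟨a2, b2, c2, rfl⟩ := hY
    simp only [TU, nablaU, alphaU, fm_Dm, projm_bracket, hU', Dm_smul, Dm_add, Dm_sub]
    rw [Dm_eq_zero_iff]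
    refine ⟨?_, ?_, ?_⟩ <;>
      (rcases hz 0 with h0 | h0 | h0 <;> rcases hz 1 with h1 | h1 | h1 <;>
        rcases hz 2 with h2 | h2 | h2)
    all_goals try (exfalso; apply hne; rw [h0, h1, h2]; norm_num; done)
    all_goals
      rw [h0, h1, h2]
      simp only [map_add, map_sub, _root_.map_mul, map_neg, _root_.map_one, _root_.map_zero,
        Complex.conj_I, Complex.conj_ofReal]
      push_cast
      first
        | ring1
        | (ring_nf; simp only [I2l, I3l, I4l, I5l, I6l, I7l, I8l]; ring1)
        | (ring_nf; simp only [I2l, I3l, I4l, I5l, I6l, I7l, I8l]; norm_num)
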